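/- Finite model property for FO[∼]: if a sentence φ ∈ FO_A[∼] is satisfied by some pair (P,w) where w is an infinite P-execution, then φ is also satisfied by some pair (P',w') where w' is a finite P'-execution. -/

import Mathlib

namespace PSyn

/-! ### Basic objects: types, alphabets, processes, events, executions -/

/-- The three process types: system, environment, mixed. -/
inductive PType where
  | s | e | se
deriving DecidableEq

/-- A finite alphabet: letters are the naturals `0, …, n-1`;
`sys a = true` means `a` is a system action (`a ∈ A_s`), otherwise `a ∈ A_e`. -/
structure Alphabet where
  n : ℕ
  sys : ℕ → Bool

/-- An event is a pair (letter, process identity). -/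
abbrev Event := ℕ × ℕ

/-- A process triple `P = (P_s, P_e, P_se)`: pairwise disjoint finite sets of processes. -/
structure ProcTriple where
  Ps : Finset ℕ
  Pe : Finset ℕ
  Pse : Finset ℕ
  disj_se : Disjoint Ps Pe
  disj_sse : Disjoint Ps Pse
  disj_ese : Disjoint Pe Pse

def ProcTriple.ofType (P : ProcTriple) : PType → Finset ℕ
  | .s => P.Ps
  | .e => P.Pe
  | .se => P.Pse

def ProcTriple.all (P : ProcTriple) : Finset ℕ := P.Ps ∪ P.Pe ∪ P.Pse

/-- `σ ∈ Σ_s = A_s × (P_s ∪ P_se)`. -/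
def isSysEvent (Alph : Alphabet) (P : ProcTriple) (σ : Event) : Prop :=
  σ.1 < Alph.n ∧ Alph.sys σ.1 = true ∧ (σ.2 ∈ P.Ps ∨ σ.2 ∈ P.Pse)

/-- `σ ∈ Σ_e = A_e × (P_e ∪ P_se)`. -/
def isEnvEvent (Alph : Alphabet) (P : ProcTriple) (σ : Event) : Prop :=
  σ.1 < Alph.n ∧ Alph.sys σ.1 = false ∧ (σ.2 ∈ P.Pe ∨ σ.2 ∈ P.Pse)

def isEvent (Alph : Alphabet) (P : ProcTriple) (σ : Event) : Prop :=
  isSysEvent Alph P σ ∨ isEnvEvent Alph P σ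

/-- A finite or infinite word over events. -/
inductive Exec where
  | fin : List Event → Exec
  | inf : (ℕ → Event) → Exec

/-- A `P`-execution: every event is an event of `P` over the alphabet. -/
def Exec.valid (Alph : Alphabet) (P : ProcTriple) : Exec → Prop
  | .fin l => ∀ σ ∈ l, isEvent Alph P σ
  | .inf g => ∀ i, isEvent Alph P (g i)

def Exec.at? : Exec → ℕ → Option Event
  | .fin l, i => l[i]?
  | .inf g, i => some (g i)

/-- The set of positions of an execution. -/
def Exec.posDom : Exec → ℕ → Prop
  | .fin l, i => i < l.length
  | .inf _, _ => True

/-- Elements of the structure associated with `(P, w)`: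
`inl p` is a process, `inr i` is a position. -/
abbrev Elem := ℕ ⊕ ℕ

/-- The universe `P ⊎ Pos(w)`. -/
def elemDom (P : ProcTriple) (w : Exec) : Elem → Prop
  | .inl p => p ∈ P.all
  | .inr i => w.posDom i

/-- The process an element belongs to (a process belongs to itself; a position
to the process executing it).  Two elements are `∼`-equivalent iff they have
the same process. -/
def procOf (w : Exec) : Elem → Option ℕ
  | .inl p => some p
  | .inr i => (w.at? i).map Prod.snd

def letterOf (w : Exec) : Elem → Option ℕ
  | .inl _ => none
  | .inr i => (w.at? i).map Prod.fst

/-! ### First-order logic FO_A[∼,<,+1] -/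

/-- Syntax of `FO_A[∼,<,+1]`; variables are naturals, letters are naturals. -/
inductive FO where
  | ptype : PType → ℕ → FO
  | letter : ℕ → ℕ → FO
  | eq : ℕ → ℕ → FO
  | sim : ℕ → ℕ → FO
  | lt : ℕ → ℕ → FO
  | succ : ℕ → ℕ → FO
  | not : FO → FO
  | or : FO → FO → FO
  | ex : ℕ → FO → FO

/-- Satisfaction of a formula in the structure `S_(P,w)` under a valuation. -/
def Sat (P : ProcTriple) (w : Exec) : (ℕ → Elem) → FO → Prop
  | v, .ptype θ x => ∃ p, v x = Sum.inl p ∧ p ∈ P.ofType θ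
  | v, .letter a x => letterOf w (v x) = some a
  | v, .eq x y => v x = v y
  | v, .sim x y => (procOf w (v x)).isSome ∧ procOf w (v x) = procOf w (v y)
  | v, .lt x y => ∃ i j, v x = Sum.inr i ∧ v y = Sum.inr j ∧ i < j ∧ w.posDom j
  | v, .succ x y => ∃ i, v x = Sum.inr i ∧ v y = Sum.inr (i + 1) ∧ w.posDom (i + 1)
  | v, .not φ => ¬ Sat P w v φ
  | v, .or φ ψ => Sat P w v φ ∨ Sat P w v ψ
  | v, .ex x φ => ∃ u : Elem, elemDom P w u ∧ Sat P w (Function.update v x u) φ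

/-- Satisfaction for sentences: `(P,w) ⊨ φ` (the valuation is irrelevant for sentences). -/
def SatS (P : ProcTriple) (w : Exec) (φ : FO) : Prop :=
  Sat P w (fun _ => Sum.inl 0) φ

def FO.free : FO → Finset ℕ
  | .ptype _ x => {x}
  | .letter _ x => {x}
  | .eq x y => {x, y}
  | .sim x y => {x, y}
  | .lt x y => {x, y}
  | .succ x y => {x, y}
  | .not φ => φ.free
  | .or φ ψ => φ.free ∪ ψ.free
  | .ex x φ => φ.free.erase x

/-- A sentence has no free variables. -/
def FO.isSentence (φ : FO) : Prop := φ.free = ∅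

def FO.vars : FO → Finset ℕ
  | .ptype _ x => {x}
  | .letter _ x => {x}
  | .eq x y => {x, y}
  | .sim x y => {x, y}
  | .lt x y => {x, y}
  | .succ x y => {x, y}
  | .not φ => φ.vars
  | .or φ ψ => φ.vars ∪ ψ.vars
  | .ex x φ => insert x φ.vars

/-- The two-variable fragment: only the variable names `0` and `1` are used. -/
def FO.twoVar (φ : FO) : Prop := φ.vars ⊆ ({0, 1} : Finset ℕ)

/-- The fragment `FO_A[∼]`: neither `<` nor `+1` occurs. -/
def FO.onlySim : FO → Prop
  | .lt _ _ => False
  | .succ _ _ => False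
  | .not φ => φ.onlySim
  | .or φ ψ => φ.onlySim ∧ ψ.onlySim
  | .ex _ φ => φ.onlySim
  | _ => True

/-! ### The asynchronous synthesis game and `Win(φ)` -/

/-- A `P`-strategy for System: `none` plays ε, `some σ` proposes the system event `σ`. -/
abbrev Strategy := List Event → Option Event

/-- The strategy only proposes system events (its codomain is `Σ_s ∪ {ε}`). -/
def properStrategy (Alph : Alphabet) (P : ProcTriple) (f : Strategy) : Prop :=
  ∀ u σ, f u = some σ → isSysEvent Alph P σ

/-- The prefix of length `i` of an execution. -/
def Exec.pre : Exec → ℕ → List Event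
  | .fin l, i => l.take i
  | .inf g, i => (List.range i).map g

/-- `w` is `f`-compatible: every system event of `w` is the one proposed by `f`. -/
def compatible (Alph : Alphabet) (P : ProcTriple) (f : Strategy) (w : Exec) : Prop :=
  ∀ i σ, w.at? i = some σ → isSysEvent Alph P σ → f (w.pre i) = some σ

/-- `w` is `f`-fair. -/
def fair (Alph : Alphabet) (P : ProcTriple) (f : Strategy) : Exec → Prop
  | .fin l => f l = none
  | .inf g =>
      {i : ℕ | f (Exec.pre (Exec.inf g) i) ≠ none}.Infinite →
      {j : ℕ | isSysEvent Alph P (g j)}.Infinite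

/-- `f` is `P`-winning for `φ`. -/
def winningStrategy (Alph : Alphabet) (P : ProcTriple) (φ : FO) (f : Strategy) : Prop :=
  properStrategy Alph P f ∧
  ∀ w : Exec, w.valid Alph P → compatible Alph P f w → fair Alph P f w → SatS P w φ

/-- Triples of naturals, indexed by the process types (s, e, se). -/
abbrev Tok := ℕ × ℕ × ℕ

/-- `Win(φ)`: the set of triples `(k_s, k_e, k_se)` admitting a winning System strategy. -/
def WinFO (Alph : Alphabet) (φ : FO) : Set Tok :=
  { k | ∃ P : ProcTriple,
      P.Ps.card = k.1 ∧ P.Pe.card = k.2.1 ∧ P.Pse.card = k.2.2 ∧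
      ∃ f : Strategy, winningStrategy Alph P φ f }

/-! ### Parameterized vector games -/

/-- Locations: `L = {0,…,B}^A`. -/
abbrev Loc (n B : ℕ) := Fin n → Fin (B + 1)

/-- A local acceptance condition: for each process type a pair `(⋈, n)`,
where the Boolean `true` stands for `=` and `false` for `≥`. -/
abbrev LCond := (Bool × ℕ) × (Bool × ℕ) × (Bool × ℕ)

/-- Configurations: `C : L → ℕ^T`. -/
abbrev GConfig (n B : ℕ) := Loc n B → Tok

/-- Transitions: maps `L × L → ℕ^T`. -/
abbrev GTrans (n B : ℕ) := Loc n B → Loc n B → Tok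

/-- A parameterized vector game `G = (A, B, F)`. -/
structure PVG where
  Alph : Alphabet
  B : ℕ
  F : List (Loc Alph.n B → LCond)

def cmpHolds (c : Bool × ℕ) (m : ℕ) : Prop := if c.1 then m = c.2 else c.2 ≤ m

def lcondHolds (κ : LCond) (t : Tok) : Prop :=
  cmpHolds κ.1 t.1 ∧ cmpHolds κ.2.1 t.2.1 ∧ cmpHolds κ.2.2 t.2.2

/-- `C ⊨ F`. -/
def accept (G : PVG) (C : GConfig G.Alph.n G.B) : Prop :=
  ∃ κ ∈ G.F, ∀ ℓ, lcondHolds (κ ℓ) (C ℓ)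

/-- `ℓ + a`: increase coordinate `a` by one, capped at `B`. -/
def locAdd {n B : ℕ} (ℓ : Loc n B) (a : ℕ) : Loc n B :=
  fun i =>
    if (i : ℕ) = a then ⟨min ((ℓ i : ℕ) + 1) B, Nat.lt_succ_of_le (min_le_right _ _)⟩
    else ℓ i

/-- `ℓ + w` for a finite word `w` over the alphabet. -/
def locAddW {n B : ℕ} (ℓ : Loc n B) : List ℕ → Loc n B
  | [] => ℓ
  | a :: u => locAddW (locAdd ℓ a) u

def isSysWord (Alph : Alphabet) (u : List ℕ) : Prop :=
  ∀ a ∈ u, a < Alph.n ∧ Alph.sys a = true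

def isEnvWord (Alph : Alphabet) (u : List ℕ) : Prop :=
  ∀ a ∈ u, a < Alph.n ∧ Alph.sys a = false

/-- System transitions: values in `ℕ × {0} × ℕ` and moves along system words. -/
def isSysTrans (G : PVG) (τ : GTrans G.Alph.n G.B) : Prop :=
  ∀ ℓ ℓ', (τ ℓ ℓ').2.1 = 0 ∧
    (τ ℓ ℓ' ≠ ((0, 0, 0) : Tok) → ∃ u : List ℕ, isSysWord G.Alph u ∧ ℓ' = locAddW ℓ u)

/-- Environment transitions: values in `{0} × ℕ × ℕ` and moves along environment words. -/
def isEnvTrans (G : PVG) (τ : GTrans G.Alph.n G.B) : Prop :=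
  ∀ ℓ ℓ', (τ ℓ ℓ').1 = 0 ∧
    (τ ℓ ℓ' ≠ ((0, 0, 0) : Tok) → ∃ u : List ℕ, isEnvWord G.Alph u ∧ ℓ' = locAddW ℓ u)

def outm {n B : ℕ} (τ : GTrans n B) (ℓ : Loc n B) : Tok := ∑ ℓ' : Loc n B, τ ℓ ℓ'

def inm {n B : ℕ} (τ : GTrans n B) (ℓ : Loc n B) : Tok := ∑ ℓ' : Loc n B, τ ℓ' ℓ

/-- Componentwise order on `ℕ^T`. -/
def tokLe (s t : Tok) : Prop := s.1 ≤ t.1 ∧ s.2.1 ≤ t.2.1 ∧ s.2.2 ≤ t.2.2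

def applicable {n B : ℕ} (τ : GTrans n B) (C : GConfig n B) : Prop :=
  ∀ ℓ, tokLe (outm τ ℓ) (C ℓ)

/-- `τ(C)(ℓ) = C(ℓ) − out_τ(ℓ) + in_τ(ℓ)` (componentwise). -/
def applyT {n B : ℕ} (τ : GTrans n B) (C : GConfig n B) : GConfig n B :=
  fun ℓ => C ℓ - outm τ ℓ + inm τ ℓ

/-- The configuration reached from `C0` after applying the transitions `ts` in order. -/
def confAt {n B : ℕ} (C0 : GConfig n B) (ts : List (GTrans n B)) : GConfig n B :=
  ts.foldl (fun C τ => applyT τ C) C0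

/-- A valid `C0`-play, represented by its list of transitions
(step `i`, 0-based, is System's if `i` is even, Environment's if `i` is odd). -/
def validPlay (G : PVG) (C0 : GConfig G.Alph.n G.B)
    (ts : List (GTrans G.Alph.n G.B)) : Prop :=
  ∀ i (h : i < ts.length),
    applicable (ts.get ⟨i, h⟩) (confAt C0 (ts.take i)) ∧
    (i % 2 = 0 → isSysTrans G (ts.get ⟨i, h⟩) ∧ accept G (confAt C0 (ts.take (i + 1)))) ∧
    (i % 2 = 1 → isEnvTrans G (ts.get ⟨i, h⟩) ∧ ¬ accept G (confAt C0 (ts.take (i + 1))))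

/-- A strategy for System in the game: a partial map from plays to transitions. -/
abbrev GStrat (n B : ℕ) := List (GTrans n B) → Option (GTrans n B)

/-- `f(C)` is defined, and whenever `f(π) = τ` for a valid play π ending in `C_i`,
`τ` is a system transition, applicable at `C_i`, and `τ(C_i) ⊨ F`. -/
def properGStrat (G : PVG) (C0 : GConfig G.Alph.n G.B) (f : GStrat G.Alph.n G.B) : Prop :=
  (f []).isSome ∧
  ∀ ts τ, validPlay G C0 ts → f ts = some τ →
    isSysTrans G τ ∧ applicable τ (confAt C0 ts) ∧ accept G (applyT τ (confAt C0 ts))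

def gCompatible {n B : ℕ} (f : GStrat n B) (ts : List (GTrans n B)) : Prop :=
  ∀ i (h : i < ts.length), i % 2 = 0 → f (ts.take i) = some (ts.get ⟨i, h⟩)

def gMaximal (G : PVG) (C0 : GConfig G.Alph.n G.B) (f : GStrat G.Alph.n G.B)
    (ts : List (GTrans G.Alph.n G.B)) : Prop :=
  ¬ ∃ ts', ts <+: ts' ∧ ts ≠ ts' ∧ validPlay G C0 ts' ∧ gCompatible f ts'

def winningGStrat (G : PVG) (C0 : GConfig G.Alph.n G.B) (f : GStrat G.Alph.n G.B) : Prop :=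
  properGStrat G C0 f ∧
  ∀ ts, validPlay G C0 ts → gCompatible f ts → gMaximal G C0 f ts →
    accept G (confAt C0 ts)

/-- A configuration is winning for System if System has a winning strategy from it. -/
def winningConf (G : PVG) (C0 : GConfig G.Alph.n G.B) : Prop :=
  ∃ f, winningGStrat G C0 f

/-- The all-zero location `ℓ_0`. -/
def loc0 (n B : ℕ) : Loc n B := fun _ => 0

/-- `C_k⃗`: all `k⃗` tokens on `ℓ_0`. -/
def initConfig {n B : ℕ} (k : Tok) : GConfig n B :=
  Function.update (fun _ => ((0, 0, 0) : Tok)) (loc0 n B) k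

/-- `Win(G)`. -/
def WinG (G : PVG) : Set Tok :=
  { k | winningConf G (initConfig k) }

/-! ### Environment chains and constants of a game -/

/-- `C <_e C'`. -/
def envStep (G : PVG) (C C' : GConfig G.Alph.n G.B) : Prop :=
  C ≠ C' ∧ ∃ τ, isEnvTrans G τ ∧ applicable τ C ∧ C' = applyT τ C

/-- There is a chain `C = C_0 <_e C_1 <_e … <_e C_d`. -/
def hasChain (G : PVG) (C : GConfig G.Alph.n G.B) (d : ℕ) : Prop :=
  ∃ cs : ℕ → GConfig G.Alph.n G.B, cs 0 = C ∧ ∀ i < d, envStep G (cs i) (cs (i + 1))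

/-- `C ∈ Conf_d`: the longest `<_e`-chain starting in `C` has length exactly `d`. -/
def ConfD (G : PVG) (C : GConfig G.Alph.n G.B) (d : ℕ) : Prop :=
  hasChain G C d ∧ ¬ hasChain G C (d + 1)

def lcondMax (κ : LCond) : ℕ := max κ.1.2 (max κ.2.1.2 κ.2.2.2)

/-- `K`: the largest constant occurring in the acceptance condition `F`. -/
def maxConst (G : PVG) : ℕ :=
  (G.F.map fun κ => Finset.univ.sup fun ℓ : Loc G.Alph.n G.B => lcondMax (κ ℓ)).foldr max 0

/-- `|A_e|`: the number of environment letters. -/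
def envCard (Alph : Alphabet) : ℕ :=
  ((Finset.range Alph.n).filter fun a => Alph.sys a = false).card

/-- `|L| = (B+1)^|A|`. -/
def numLoc (G : PVG) : ℕ := (G.B + 1) ^ G.Alph.n

/-! ### Cutoffs -/

/-- `k⃗_0` is a cutoff of `W` with respect to `(N_s, N_e, N_se)`. -/
def IsCutoff (Ns Ne Nse : Set ℕ) (W : Set Tok) (k0 : Tok) : Prop :=
  k0.1 ∈ Ns ∧ k0.2.1 ∈ Ne ∧ k0.2.2 ∈ Nse ∧
  ((∀ k : Tok, k.1 ∈ Ns → k.2.1 ∈ Ne → k.2.2 ∈ Nse →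
      k0.1 ≤ k.1 → k0.2.1 ≤ k.2.1 → k0.2.2 ≤ k.2.2 → k ∈ W) ∨
   (∀ k : Tok, k.1 ∈ Ns → k.2.1 ∈ Ne → k.2.2 ∈ Nse →
      k0.1 ≤ k.1 → k0.2.1 ≤ k.2.1 → k0.2.2 ≤ k.2.2 → k ∉ W))

/-! ### Counting formulas and the normal form for FO[∼] -/

def FO.and (φ ψ : FO) : FO := FO.not (FO.or (FO.not φ) (FO.not ψ))

def FO.imp (φ ψ : FO) : FO := FO.or (FO.not φ) ψ

def FO.iff (φ ψ : FO) : FO := FO.and (φ.imp ψ) (ψ.imp φ)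

def FO.all (x : ℕ) (φ : FO) : FO := FO.not (FO.ex x (FO.not φ))

def trueFO : FO := FO.eq 0 0

def bigAnd (l : List FO) : FO := l.foldr FO.and trueFO

def bigOr (l : List FO) : FO := l.foldr FO.or (FO.not trueFO)

/-- `∃^{≥m} y. (mk y)`: there are at least `m` distinct witnesses; the witness
variables are `base, base+1, …, base+m-1`. -/
def exGe (m base : ℕ) (mk : ℕ → FO) : FO :=
  let distinct : List FO :=
    (List.range m).flatMap fun i =>
      ((List.range m).filter fun j => decide (i < j)).map fun j =>
        FO.not (FO.eq (base + i) (base + j))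
  let body : FO :=
    FO.and (bigAnd distinct) (bigAnd ((List.range m).map fun i => mk (base + i)))
  ((List.range m).map (base + ·)).foldr FO.ex body

/-- `∃^{=m} y. (mk y) := ∃^{≥m} y. (mk y) ∧ ¬ ∃^{≥m+1} y. (mk y)`. -/
def exEq (m base : ℕ) (mk : ℕ → FO) : FO :=
  FO.and (exGe m base mk) (FO.not (exGe (m + 1) base mk))

/-- `ψ_{B,ℓ}(y)`: in the class of `y`, each letter `a` occurs exactly `ℓ(a)` times
if `ℓ(a) < B`, and at least `ℓ(a)` times if `ℓ(a) = B`. -/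
def psiCount (n B : ℕ) (ℓ : ℕ → ℕ) (y : ℕ) : FO :=
  bigAnd ((List.range n).map fun a =>
    if ℓ a < B then
      exEq (ℓ a) (y + 1) (fun z => FO.and (FO.sim y z) (FO.letter a z))
    else
      exGe (ℓ a) (y + 1) (fun z => FO.and (FO.sim y z) (FO.letter a z)))

/-- `∃^{⋈m} y. (θ(y) ∧ ψ_{B,ℓ}(y))`, where `⋈` is `=` if `isEq` and `≥` otherwise. -/
def nfAtom (n B : ℕ) (isEq : Bool) (m : ℕ) (θ : PType) (ℓ : ℕ → ℕ) : FO :=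
  let mk : ℕ → FO := fun y => FO.and (FO.ptype θ y) (psiCount n B ℓ y)
  if isEq then exEq m 0 mk else exGe m 0 mk

/-! ### The normalized synthesis problem -/

/-- A normalized strategy: maps finite executions to finite system words. -/
abbrev NormStrategy := List Event → Option (List Event)

/-- A normalized `P`-execution, given by its block decomposition `bs`
(`bs[j]` with `j` even is a System block, `j` odd an Environment block;
this corresponds to the 1-based indexing `w = w_1 … w_n` of the paper). -/
def NormExec (Alph : Alphabet) (P : ProcTriple) (φ : FO) (bs : List (List Event)) : Prop :=
  1 ≤ bs.length ∧
  ∀ j (h : j < bs.length),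
    (j % 2 = 0 → (∀ σ ∈ bs.get ⟨j, h⟩, isSysEvent Alph P σ) ∧
        SatS P (Exec.fin ((bs.take (j + 1)).flatten)) φ) ∧
    (j % 2 = 1 → (∀ σ ∈ bs.get ⟨j, h⟩, isEnvEvent Alph P σ) ∧
        ¬ SatS P (Exec.fin ((bs.take (j + 1)).flatten)) φ)

/-- Properness of a normalized strategy: `f(ε)` is defined, outputs are system
words, and `(P, w · f(w)) ⊨ φ` whenever `f(w)` is defined. -/
def properNStrat (Alph : Alphabet) (P : ProcTriple) (φ : FO) (f : NormStrategy) : Prop :=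
  (f []).isSome ∧
  ∀ w u, f w = some u →
    (∀ σ ∈ u, isSysEvent Alph P σ) ∧ SatS P (Exec.fin (w ++ u)) φ

def nCompatible (f : NormStrategy) (bs : List (List Event)) : Prop :=
  ∀ j (h : j < bs.length), j % 2 = 0 → f ((bs.take j).flatten) = some (bs.get ⟨j, h⟩)

def nMaximal (Alph : Alphabet) (P : ProcTriple) (φ : FO) (f : NormStrategy)
    (bs : List (List Event)) : Prop :=
  ¬ ∃ bs', bs <+: bs' ∧ bs ≠ bs' ∧ NormExec Alph P φ bs' ∧ nCompatible f bs'

def winningNStrategy (Alph : Alphabet) (P : ProcTriple) (φ : FO) (f : NormStrategy) : Prop :=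
  properNStrat Alph P φ f ∧
  ∀ bs, NormExec Alph P φ bs → nCompatible f bs → nMaximal Alph P φ f bs →
    SatS P (Exec.fin bs.flatten) φ

/-- `NWin(φ)`. -/
def NWin (Alph : Alphabet) (φ : FO) : Set Tok :=
  { k | ∃ P : ProcTriple,
      P.Ps.card = k.1 ∧ P.Pe.card = k.2.1 ∧ P.Pse.card = k.2.2 ∧
      ∃ f : NormStrategy, winningNStrategy Alph P φ f }

/-! ### Concrete alphabet and formulas of the examples -/

/-- The alphabet with `A_s = {a, b} = {0, 1}` and `A_e = {c, d} = {2, 3}`. -/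
def alph4 : Alphabet := ⟨4, fun a => decide (a < 2)⟩

/-- `φ_1 = ∀x.((s(x) ∨ se(x)) → ∃y.(x∼y ∧ (a(y) ∨ b(y))))`. -/
def phi1 : FO :=
  FO.all 0 (FO.imp (FO.or (FO.ptype .s 0) (FO.ptype .se 0))
    (FO.ex 1 (FO.and (FO.sim 0 1) (FO.or (FO.letter 0 1) (FO.letter 1 1)))))

/-- `φ_4 = ∀x.((∃^{=2}y.(x∼y ∧ a(y))) ↔ (∃^{=2}y.(x∼y ∧ d(y))))`. -/
def phi4 : FO :=
  FO.all 0 (FO.iff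
    (exEq 2 1 fun y => FO.and (FO.sim 0 y) (FO.letter 0 y))
    (exEq 2 1 fun y => FO.and (FO.sim 0 y) (FO.letter 3 y)))

/-- Vectors `{0,…,3}^{4}` as functions `ℕ → ℕ`. -/
def vec4 (v0 v1 v2 v3 : ℕ) : ℕ → ℕ := fun i => [v0, v1, v2, v3].getD i 0

def allVecs4 : List (ℕ → ℕ) :=
  (List.range 4).flatMap fun v0 =>
    (List.range 4).flatMap fun v1 =>
      (List.range 4).flatMap fun v2 =>
        (List.range 4).map fun v3 => vec4 v0 v1 v2 v3

/-- `Z`: vectors with `ℓ(a) = 2 ≠ ℓ(d)` or `ℓ(d) = 2 ≠ ℓ(a)` (letters `a = 0`, `d = 3`). -/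
def Zvecs : List (ℕ → ℕ) :=
  allVecs4.filter fun ℓ => decide ((ℓ 0 = 2 ∧ ℓ 3 ≠ 2) ∨ (ℓ 3 = 2 ∧ ℓ 0 ≠ 2))

/-- `φ_4' = ⋀_{θ ∈ T, ℓ ∈ Z} ∃^{=0} y.(θ(y) ∧ ψ_{3,ℓ}(y))`. -/
def phi4' : FO :=
  bigAnd (([PType.s, PType.e, PType.se].flatMap fun θ =>
    Zvecs.map fun ℓ => nfAtom 4 3 true 0 θ ℓ))

/-! ### Effective encodings of inputs (for decidability statements) -/

def decodePType (k : ℕ) : PType :=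
  if k % 3 = 0 then .s else if k % 3 = 1 then .e else .se

/-- Surjective decoding of formulas from naturals (with fuel). -/
def decodeFOAux : ℕ → ℕ → FO
  | 0, _ => FO.eq 0 0
  | fuel + 1, c =>
    let t := c % 9
    let m := c / 9
    let a := m.unpair.1
    let b := m.unpair.2
    if t = 0 then FO.ptype (decodePType a) b
    else if t = 1 then FO.letter a b
    else if t = 2 then FO.eq a b
    else if t = 3 then FO.sim a b
    else if t = 4 then FO.lt a b
    else if t = 5 then FO.succ a b
    else if t = 6 then FO.not (decodeFOAux fuel m)
    else if t = 7 then FO.or (decodeFOAux fuel a) (decodeFOAux fuel b)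
    else FO.ex a (decodeFOAux fuel b)

def decodeFO (c : ℕ) : FO := decodeFOAux c c

/-- Decoding an input of the synthesis/satisfiability problems: an alphabet
(size and partition) together with a formula. -/
def decodeFOInput (c : ℕ) : Alphabet × FO :=
  (⟨c.unpair.1.unpair.1, fun a => (c.unpair.1.unpair.2).testBit a⟩, decodeFO c.unpair.2)

def decodeBN (m : ℕ) : Bool × ℕ := (decide (m % 2 = 0), m / 2)

def decodeLCond (m : ℕ) : LCond :=
  (decodeBN m.unpair.1, decodeBN m.unpair.2.unpair.1, decodeBN m.unpair.2.unpair.2)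

/-- An explicit index of a location, used to decode local acceptance conditions. -/
def locIndex {n B : ℕ} (ℓ : Loc n B) : ℕ := ∑ i : Fin n, (ℓ i : ℕ) * (B + 1) ^ (i : ℕ)

/-- Decoding a parameterized vector game from a natural number. -/
def decodeGame (c : ℕ) : PVG :=
  let n := c.unpair.1.unpair.1
  let sy := c.unpair.1.unpair.2
  let B := c.unpair.2.unpair.1
  let Fc := c.unpair.2.unpair.2
  { Alph := ⟨n, fun a => sy.testBit a⟩
    B := B
    F := (Denumerable.ofNat (List ℕ) Fc).map fun kc =>
      fun ℓ => decodeLCond ((Denumerable.ofNat (List ℕ) kc).getD (locIndex ℓ) 0) }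

/-!
An `FO[∼]` formula sees a position only through its event (letter and process), so positions
carrying the same event are interchangeable. An Ehrenfeucht–Fraïssé argument therefore shows that a
formula of quantifier depth `q` cannot tell apart two executions over the same processes in which
every event occurs equally often, where counts are compared only up to `q + 1`. Cutting the
occurrence counts of the infinite execution down to `q + 1` and listing the (finitely many) events
that many times yields a finite execution satisfying the same formula.
-/

theorem _root_.List.encard_setOf_getElem?_eq_some {α : Type*} [DecidableEq α]
    (l : List α) (a : α) : {i : ℕ | l[i]? = some a}.encard = l.count a := by
  induction l with
  | nil => simp
  | cons b t ih =>
    have hsplit : {i | (b :: t)[i]? = some a} =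
        {i | i = 0 ∧ b = a} ∪ (· + 1) '' {i | t[i]? = some a} := by
      ext (_ | i) <;> simp
    rw [hsplit, Set.encard_union_eq, Set.InjOn.encard_image (add_left_injective 1).injOn, ih,
      List.count_cons]
    · by_cases hb : b = a <;> simp [hb, add_comm]
    · rw [Set.disjoint_left]
      rintro _ ⟨rfl, -⟩ ⟨i, -, hi⟩
      exact Nat.succ_ne_zero i hi

namespace Exec

def occurrences (w : Exec) (σ : Event) : Set ℕ := {i | w.at? i = some σ}

theorem posDom_iff_exists_at? {w : Exec} {i : ℕ} : w.posDom i ↔ ∃ σ, w.at? i = some σ := by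
  cases w <;> simp [posDom, at?, ← Option.isSome_iff_exists]

theorem isEvent_of_at? {Alph : Alphabet} {P : ProcTriple} {w : Exec} (hw : w.valid Alph P)
    {i : ℕ} {σ : Event} (h : w.at? i = some σ) : isEvent Alph P σ := by
  cases w with
  | fin l => exact hw σ (List.mem_of_getElem? h)
  | inf g => exact Option.some_inj.mp h ▸ hw i

theorem encard_occurrences_fin (l : List Event) (σ : Event) :
    ((Exec.fin l).occurrences σ).encard = Multiset.count σ l :=
  (l.encard_setOf_getElem?_eq_some σ).trans (by rw [Multiset.coe_count])

end Exec

theorem mem_range_product_all_of_isEvent {Alph : Alphabet} {P : ProcTriple} {σ : Event}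
    (h : isEvent Alph P σ) : σ ∈ Finset.range Alph.n ×ˢ P.all := by
  simp only [ProcTriple.all, Finset.mem_product, Finset.mem_range, Finset.mem_union]
  rcases h with ⟨hn, -, hp⟩ | ⟨hn, -, hp⟩ <;> tauto

def Matched (wa wb : Exec) : Elem → Elem → Prop
  | .inl p, .inl q => p = q
  | .inr i, .inr j => ∃ σ, wa.at? i = some σ ∧ wb.at? j = some σ
  | _, _ => False

namespace Matched

variable {wa wb : Exec} {u₁ u₂ : Elem}

theorem symm (h : Matched wa wb u₁ u₂) : Matched wb wa u₂ u₁ := by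
  rcases u₁ with p | i <;> rcases u₂ with q | j
  · exact Eq.symm h
  · exact h.elim
  · exact h.elim
  · obtain ⟨σ, hi, hj⟩ := h
    exact ⟨σ, hj, hi⟩

theorem eq_inl_iff (h : Matched wa wb u₁ u₂) {p : ℕ} : u₁ = .inl p ↔ u₂ = .inl p := by
  rcases u₁ with _ | _ <;> rcases u₂ with _ | _ <;> simp_all [Matched]

theorem procOf_eq (h : Matched wa wb u₁ u₂) : procOf wa u₁ = procOf wb u₂ := by
  rcases u₁ with p | i <;> rcases u₂ with q | j
  · simp [procOf, show p = q from h]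
  · exact h.elim
  · exact h.elim
  · obtain ⟨σ, hi, hj⟩ := h
    simp [procOf, hi, hj]

theorem letterOf_eq (h : Matched wa wb u₁ u₂) : letterOf wa u₁ = letterOf wb u₂ := by
  rcases u₁ with p | i <;> rcases u₂ with q | j
  · rfl
  · exact h.elim
  · exact h.elim
  · obtain ⟨σ, hi, hj⟩ := h
    simp [letterOf, hi, hj]

theorem elemDom {P : ProcTriple} (h : Matched wa wb u₁ u₂) (hu₁ : elemDom P wa u₁) :
    elemDom P wb u₂ := by
  rcases u₁ with p | i <;> rcases u₂ with q | j
  · exact h ▸ hu₁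
  · exact h.elim
  · exact h.elim
  · obtain ⟨σ, -, hj⟩ := h
    exact Exec.posDom_iff_exists_at?.mpr ⟨σ, hj⟩

end Matched

structure PartialIso (wa wb : Exec) (va vb : ℕ → Elem) : Prop where
  matched : ∀ x, Matched wa wb (va x) (vb x)
  eq_iff : ∀ x y, va x = va y ↔ vb x = vb y

namespace PartialIso

variable {wa wb : Exec} {va vb : ℕ → Elem}

theorem symm (h : PartialIso wa wb va vb) : PartialIso wb wa vb va :=
  ⟨fun x => (h.matched x).symm, fun x y => (h.eq_iff x y).symm⟩

theorem update (h : PartialIso wa wb va vb) {u₁ u₂ : Elem} (hu : Matched wa wb u₁ u₂)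
    (hfresh : ∀ y, va y = u₁ ↔ vb y = u₂) (x : ℕ) :
    PartialIso wa wb (Function.update va x u₁) (Function.update vb x u₂) := by
  refine ⟨fun z => ?_, fun z y => ?_⟩
  · rcases eq_or_ne z x with rfl | hz
    · simpa using hu
    · simpa [hz] using h.matched z
  · by_cases hz : z = x <;> by_cases hy : y = x
    · simp [hz, hy]
    · simpa [hz, hy, eq_comm] using hfresh y
    · simpa [hz, hy] using hfresh z
    · simpa [hz, hy] using h.eq_iff z y

end PartialIso

def AgreeUpTo (K : ℕ) (wa wb : Exec) : Prop :=
  ∀ σ, min (wa.occurrences σ).encard K = min (wb.occurrences σ).encard K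

theorem AgreeUpTo.symm {K : ℕ} {wa wb : Exec} (h : AgreeUpTo K wa wb) : AgreeUpTo K wb wa :=
  fun σ => (h σ).symm

namespace PartialIso

variable {K : ℕ} {wa wb : Exec} {va vb : ℕ → Elem}

theorem encard_named_occurrences_le (h : PartialIso wa wb va vb) (σ : Event) :
    (wb.occurrences σ ∩ Sum.inr ⁻¹' Set.range vb).encard
      ≤ (wa.occurrences σ ∩ Sum.inr ⁻¹' Set.range va).encard := by
  have hback : ∀ j ∈ wb.occurrences σ ∩ Sum.inr ⁻¹' Set.range vb,
      ∃ i ∈ wa.occurrences σ ∩ Sum.inr ⁻¹' Set.range va, ∃ y, va y = .inr i ∧ vb y = .inr j := by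
    rintro j ⟨hj, y, hy⟩
    have hm := h.matched y
    rw [hy] at hm
    rcases hva : va y with p | i
    · rw [hva] at hm
      exact hm.elim
    · rw [hva] at hm
      obtain ⟨τ, hiτ, hjτ⟩ := hm
      obtain rfl : τ = σ := Option.some_injective _ (hjτ.symm.trans hj)
      exact ⟨i, ⟨hiτ, y, hva⟩, y, hva, hy⟩
  choose! f hf_mem hf using hback
  refine Set.encard_le_encard_of_injOn hf_mem fun j₁ hj₁ j₂ hj₂ hf₁₂ => ?_
  obtain ⟨y₁, hay₁, hby₁⟩ := hf j₁ hj₁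
  obtain ⟨y₂, hay₂, hby₂⟩ := hf j₂ hj₂
  have hvb := (h.eq_iff y₁ y₂).mp (by rw [hay₁, hay₂, hf₁₂])
  rw [hby₁, hby₂] at hvb
  exact Sum.inr_injective hvb

theorem exists_fresh_position (h : PartialIso wa wb va vb) (hw : AgreeUpTo K wa wb)
    (hK : (Set.range va).encard + 1 ≤ K) {i : ℕ} {σ : Event} (hi : wa.at? i = some σ)
    (hfresh : .inr i ∉ Set.range va) : ∃ j, wb.at? j = some σ ∧ .inr j ∉ Set.range vb := by
  -- The named positions of `wb` carrying `σ` are no more than those of `wa`, which together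
  -- with `i` are fewer than both `K` and all occurrences of `σ` in `wa`; `hw` carries this
  -- bound over to `wb`.
  set Sa := wa.occurrences σ ∩ Sum.inr ⁻¹' Set.range va
  set Sb := wb.occurrences σ ∩ Sum.inr ⁻¹' Set.range vb
  have hSb_le : Sb.encard ≤ Sa.encard := h.encard_named_occurrences_le σ
  have hSa_le : Sa.encard ≤ (Set.range va).encard :=
    Set.encard_le_encard_of_injOn (fun _ h => h.2) Sum.inr_injective.injOn
  have hSb_lt : Sb.encard < (wb.occurrences σ).encard := by
    have hSb_ne_top : Sb.encard ≠ ⊤ := ne_top_of_le_ne_top (ENat.natCast_ne_top K)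
      ((hSb_le.trans hSa_le).trans (le_self_add.trans hK))
    rw [← ENat.add_one_le_iff hSb_ne_top]
    calc Sb.encard + 1 ≤ Sa.encard + 1 := by gcongr
      _ ≤ min (wa.occurrences σ).encard K := by
        refine le_min ?_ (le_trans (by gcongr) hK)
        rw [← Set.encard_insert_of_notMem fun hmem => hfresh hmem.2]
        exact Set.encard_le_encard (Set.insert_subset hi Set.inter_subset_left)
      _ = min (wb.occurrences σ).encard K := hw σ
      _ ≤ (wb.occurrences σ).encard := min_le_left _ _
  obtain ⟨j, hj, hjSb⟩ := Set.not_subset.mp fun hsub =>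
    (Set.encard_le_encard hsub).not_gt hSb_lt
  exact ⟨j, hj, fun hmem => hjSb ⟨hj, hmem⟩⟩

theorem exists_extend (h : PartialIso wa wb va vb) (hw : AgreeUpTo K wa wb)
    (hK : (Set.range va).encard + 1 ≤ K) {P : ProcTriple} {u₁ : Elem} (hu₁ : elemDom P wa u₁) :
    ∃ u₂, elemDom P wb u₂ ∧ Matched wa wb u₁ u₂ ∧ ∀ y, va y = u₁ ↔ vb y = u₂ := by
  suffices ∃ u₂, Matched wa wb u₁ u₂ ∧ ∀ y, va y = u₁ ↔ vb y = u₂ from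
    let ⟨u₂, hm, hy⟩ := this
    ⟨u₂, hm.elemDom hu₁, hm, hy⟩
  by_cases hused : u₁ ∈ Set.range va
  · obtain ⟨y₀, rfl⟩ := hused
    exact ⟨vb y₀, h.matched y₀, fun y => h.eq_iff y y₀⟩
  rcases u₁ with p | i
  · exact ⟨.inl p, rfl, fun y => (h.matched y).eq_inl_iff⟩
  obtain ⟨σ, hi⟩ := Exec.posDom_iff_exists_at?.mp hu₁
  obtain ⟨j, hj, hjfresh⟩ := h.exists_fresh_position hw hK hi hused
  exact ⟨.inr j, ⟨σ, hi, hj⟩,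
    fun y => iff_of_false (fun hy => hused ⟨y, hy⟩) (fun hy => hjfresh ⟨y, hy⟩)⟩

end PartialIso

def FO.qdepth : FO → ℕ
  | .not φ => φ.qdepth
  | .or φ ψ => max φ.qdepth ψ.qdepth
  | .ex _ φ => φ.qdepth + 1
  | _ => 0

theorem encard_range_update_add_le {α β : Type*} [DecidableEq α] {f : α → β} {n : ℕ} {K : ℕ∞}
    (h : (Set.range f).encard + (n + 1 : ℕ) ≤ K) (a : α) (b : β) :
    (Set.range (Function.update f a b)).encard + n ≤ K := by
  have hsub : Set.range (Function.update f a b) ⊆ insert b (Set.range f) := by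
    rintro _ ⟨x, rfl⟩
    by_cases hx : x = a <;> simp [hx]
  calc (Set.range (Function.update f a b)).encard + n
      ≤ (Set.range f).encard + 1 + n := by
        gcongr
        exact (Set.encard_le_encard hsub).trans (Set.encard_insert_le _ _)
    _ = (Set.range f).encard + (n + 1 : ℕ) := by push_cast; ring
    _ ≤ K := h

theorem sat_of_agreeUpTo {P : ProcTriple} {K : ℕ} {ψ : FO} (hψ : ψ.onlySim) {wa wb : Exec}
    (hw : AgreeUpTo K wa wb) {va vb : ℕ → Elem} (hv : PartialIso wa wb va vb)
    (ha : (Set.range va).encard + ψ.qdepth ≤ K) (hb : (Set.range vb).encard + ψ.qdepth ≤ K)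
    (hsat : Sat P wa va ψ) : Sat P wb vb ψ := by
  induction ψ generalizing wa wb va vb with
  | ptype θ x =>
    obtain ⟨p, hp, hmem⟩ := hsat
    exact ⟨p, (hv.matched x).eq_inl_iff.mp hp, hmem⟩
  | letter a x => exact (hv.matched x).letterOf_eq.symm.trans hsat
  | eq x y => exact (hv.eq_iff x y).mp hsat
  | sim x y =>
    have hx := (hv.matched x).procOf_eq
    have hy := (hv.matched y).procOf_eq
    exact ⟨hx ▸ hsat.1, hx ▸ hy ▸ hsat.2⟩
  | lt | succ => exact hψ.elim
  | not ψ ih => exact fun hsat' => hsat (ih hψ hw.symm hv.symm hb ha hsat')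
  | or ψ₁ ψ₂ ih₁ ih₂ =>
    have hle {v : ℕ → Elem} {n : ℕ}
        (h : (Set.range v).encard + (max ψ₁.qdepth ψ₂.qdepth : ℕ) ≤ K)
        (hn : n ≤ max ψ₁.qdepth ψ₂.qdepth) : (Set.range v).encard + n ≤ K :=
      le_trans (by gcongr) h
    rcases hsat with hsat | hsat
    · exact .inl (ih₁ hψ.1 hw hv (hle ha (le_max_left _ _)) (hle hb (le_max_left _ _)) hsat)
    · exact .inr (ih₂ hψ.2 hw hv (hle ha (le_max_right _ _)) (hle hb (le_max_right _ _)) hsat)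
  | ex x ψ ih =>
    obtain ⟨u₁, hu₁, hsat⟩ := hsat
    have hK : (Set.range va).encard + 1 ≤ K :=
      le_trans (by gcongr; exact_mod_cast Nat.le_add_left 1 _) ha
    obtain ⟨u₂, hu₂, hm, hfresh⟩ := hv.exists_extend hw hK hu₁
    exact ⟨u₂, hu₂, ih hψ hw (hv.update hm hfresh x) (encard_range_update_add_le ha x u₁)
      (encard_range_update_add_le hb x u₂) hsat⟩

theorem satS_of_agreeUpTo {P : ProcTriple} {φ : FO} (hφ : φ.onlySim) {wa wb : Exec}
    (hw : AgreeUpTo (φ.qdepth + 1) wa wb) (hsat : SatS P wa φ) : SatS P wb φ := by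
  have hbound : (Set.range fun _ : ℕ => (Sum.inl 0 : Elem)).encard + φ.qdepth
      ≤ (φ.qdepth + 1 : ℕ) := by
    rw [Set.range_const, Set.encard_singleton, add_comm]
    push_cast
    rfl
  have hv : PartialIso wa wb (fun _ => .inl 0) (fun _ => .inl 0) :=
    ⟨fun _ => rfl, fun _ _ => Iff.rfl⟩
  exact sat_of_agreeUpTo hφ hw hv hbound hbound hsat

theorem exists_fin_agreeUpTo {Alph : Alphabet} {P : ProcTriple} {w : Exec}
    (hw : w.valid Alph P) (K : ℕ) :
    ∃ l, (Exec.fin l).valid Alph P ∧ AgreeUpTo K w (.fin l) := by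
  classical
  set m : Event → ℕ := fun σ => (min (w.occurrences σ).encard K).toNat
  have hm (σ : Event) : (m σ : ℕ∞) = min (w.occurrences σ).encard K :=
    ENat.natCast_toNat (ne_top_of_le_ne_top (ENat.natCast_ne_top K) (min_le_right _ _))
  set E := Finset.range Alph.n ×ˢ P.all
  have hmE (σ : Event) (hσ : σ ∉ E) : m σ = 0 := by
    have hempty : w.occurrences σ = ∅ := Set.eq_empty_of_forall_notMem fun i hi =>
      hσ (mem_range_product_all_of_isEvent (Exec.isEvent_of_at? hw hi))
    simp [m, hempty]
  set M := ∑ σ ∈ E, Multiset.replicate (m σ) σ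
  have hcount (σ : Event) : M.count σ = m σ := by
    rw [Multiset.count_sum']
    simp only [Multiset.count_replicate, Finset.sum_ite_eq']
    split_ifs with hσ
    · rfl
    · exact (hmE σ hσ).symm
  refine ⟨M.toList, fun σ hσ => ?_, fun σ => ?_⟩
  · have hpos : m σ ≠ 0 := hcount σ ▸ (Multiset.count_pos.mpr (Multiset.mem_toList.mp hσ)).ne'
    have hne : (w.occurrences σ).encard ≠ 0 := fun h0 => hpos (by simpa [h0] using hm σ)
    obtain ⟨i, hi⟩ := Set.encard_ne_zero.mp hne
    exact Exec.isEvent_of_at? hw hi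
  · rw [Exec.encard_occurrences_fin, Multiset.coe_toList, hcount, hm,
      min_eq_left (min_le_right _ _)]

theorem finite_model_property_FOsim_general (Alph : Alphabet) (φ : FO)
    (hsim : φ.onlySim)
    (h : ∃ (P : ProcTriple) (g : ℕ → Event),
      Exec.valid Alph P (Exec.inf g) ∧ SatS P (Exec.inf g) φ) :
    ∃ (P' : ProcTriple) (l : List Event),
      Exec.valid Alph P' (Exec.fin l) ∧ SatS P' (Exec.fin l) φ := by
  obtain ⟨P, g, hg, hsat⟩ := h
  obtain ⟨l, hl, hagree⟩ := exists_fin_agreeUpTo hg (φ.qdepth + 1)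
  exact ⟨P, l, hl, satS_of_agreeUpTo hsim hagree hsat⟩

/-- Finite model property for FO[∼]: if a sentence `φ ∈ FO_A[∼]` is
satisfied by some pair `(P, w)` with `w` an infinite `P`-execution, then it is
satisfied by some pair `(P', w')` with `w'` a finite `P'`-execution. -/
theorem finite_model_property_FOsim (Alph : Alphabet) (φ : FO)
    (hsen : φ.isSentence) (hsim : φ.onlySim)
    (h : ∃ (P : ProcTriple) (g : ℕ → Event),
      Exec.valid Alph P (Exec.inf g) ∧ SatS P (Exec.inf g) φ) :
    ∃ (P' : ProcTriple) (l : List Event),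
      Exec.valid Alph P' (Exec.fin l) ∧ SatS P' (Exec.fin l) φ :=
  finite_model_property_FOsim_general Alph φ hsim h

end PSyn
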